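/- Let $0 < s, t \le 1$ and $p \in (0,1]$. Define $C(s,t) = p^2(s^{-1}\wedge t^{-1} - 1) + p(1-p)(s^{-1}\wedge t^{-1} - 1) + p(1-p)I_1(s,t) - \frac{1}{s}p(1-p)I_2(s,t) - \frac{1}{t}p(1-p)I_3(s,t)$, where for $s \le t$: $I_1(s,t) = \int_t^1\int_s^1 \frac{x\wedge y}{x^2y^2}dx\,dy$, $I_2(s,t) = \int_t^1 \frac{s\wedge u - su}{u^2}du$, $I_3(s,t) = \int_s^1 \frac{t\wedge u - tu}{u^2}du$ (and symmetrically for $t \le s$). Then $C(s,t) = p(s^{-1}\wedge t^{-1} - 1)$. -/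

import Mathlib

/-! For `s ≤ t` each integral is elementary once the minimum is resolved by splitting the range
at its kink, and the resulting closed forms satisfy `I₁ = I₂ / s + I₃ / t`. Hence the
`p(1-p)` terms cancel and what remains is
`(p² + p(1-p))(s⁻¹ ∧ t⁻¹ - 1) = p(s⁻¹ ∧ t⁻¹ - 1)`. -/

open Set Real intervalIntegral

section PositiveHalfLine

variable {f f' : ℝ → ℝ} {a b : ℝ}

lemma intervalIntegrable_of_continuousOn_Ioi (hf : ContinuousOn f (Ioi 0)) (ha : 0 < a)
    (hb : 0 < b) : IntervalIntegrable f MeasureTheory.volume a b :=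
  (hf.mono fun _ hx => (lt_min ha hb).trans_le hx.1).intervalIntegrable

lemma integral_eq_sub_of_hasDerivAt_of_pos (hf : ∀ x, 0 < x → HasDerivAt f (f' x) x)
    (hf' : ContinuousOn f' (Ioi 0)) (ha : 0 < a) (hb : 0 < b) :
    ∫ x in a..b, f' x = f b - f a :=
  integral_eq_sub_of_hasDerivAt (fun _ hx => hf _ ((lt_min ha hb).trans_le hx.1))
    (intervalIntegrable_of_continuousOn_Ioi hf' ha hb)

end PositiveHalfLine

section MinKernel

variable {a b c : ℝ}

lemma continuousOn_min_div_sq : ContinuousOn (fun u : ℝ => min c u / u ^ 2) (Ioi 0) :=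
  (continuous_const.min continuous_id).continuousOn.div (by fun_prop) fun _ hu => by
    have : (0 : ℝ) < _ := hu; positivity

lemma integral_min_div_sq_of_le (ha : 0 < a) (hab : a ≤ b) (hca : c ≤ a) :
    ∫ u in a..b, min c u / u ^ 2 = c / a - c / b := by
  have hmin : EqOn (fun u : ℝ => min c u / u ^ 2) (fun u => c / u ^ 2) (uIcc a b) :=
    fun u hu => by
      rw [uIcc_of_le hab] at hu
      simp only [min_eq_left (hca.trans hu.1)]
  rw [integral_congr hmin]
  have hderiv (u : ℝ) (hu : 0 < u) : HasDerivAt (fun u => -(c * u⁻¹)) (c / u ^ 2) u :=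
    ((hasDerivAt_inv hu.ne').const_mul c).neg.congr_deriv (by ring)
  have hcont : ContinuousOn (fun u : ℝ => c / u ^ 2) (Ioi 0) :=
    continuousOn_const.div (by fun_prop) fun _ hu => by have : (0 : ℝ) < _ := hu; positivity
  rw [integral_eq_sub_of_hasDerivAt_of_pos hderiv hcont ha (ha.trans_le hab)]
  ring

lemma integral_min_div_sq_of_le_of_le (ha : 0 < a) (hac : a ≤ c) (hcb : c ≤ b) :
    ∫ u in a..b, min c u / u ^ 2 = log c - log a + 1 - c / b := by
  have hc : 0 < c := ha.trans_le hac
  have hb : 0 < b := hc.trans_le hcb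
  rw [← integral_add_adjacent_intervals
    (intervalIntegrable_of_continuousOn_Ioi continuousOn_min_div_sq ha hc)
    (intervalIntegrable_of_continuousOn_Ioi continuousOn_min_div_sq hc hb),
    integral_min_div_sq_of_le hc hcb le_rfl, div_self hc.ne']
  have hmin : EqOn (fun u : ℝ => min c u / u ^ 2) (fun u => 1 / u) (uIcc a c) :=
    fun u hu => by
      rw [uIcc_of_le hac] at hu
      have : 0 < u := ha.trans_le hu.1
      simp only [min_eq_right hu.2]
      field_simp
  rw [integral_congr hmin, integral_one_div_of_pos ha hc, log_div hc.ne' ha.ne']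
  ring

lemma integral_min_sub_mul_div_sq (ha : 0 < a) (hb : 0 < b) :
    ∫ u in a..b, (min c u - c * u) / u ^ 2 =
      (∫ u in a..b, min c u / u ^ 2) - c * (log b - log a) := by
  have hsplit : EqOn (fun u : ℝ => (min c u - c * u) / u ^ 2)
      (fun u => min c u / u ^ 2 - c * u⁻¹) (uIcc a b) := fun u hu => by
    have : u ≠ 0 := ((lt_min ha hb).trans_le hu.1).ne'
    field_simp
  rw [integral_congr hsplit, integral_sub, integral_const_mul, integral_inv_of_pos ha hb,
    log_div hb.ne' ha.ne']
  · exact intervalIntegrable_of_continuousOn_Ioi continuousOn_min_div_sq ha hb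
  · exact (intervalIntegrable_of_continuousOn_Ioi
      (continuousOn_inv₀.mono fun _ hu => ne_of_gt hu) ha hb).const_mul c

end MinKernel

lemma integral_integral_min_div_sq_mul_sq {s t : ℝ} (hs : 0 < s) (hst : s ≤ t) (ht : t ≤ 1) :
    ∫ y in t..1, ∫ x in s..1, min x y / (x ^ 2 * y ^ 2) =
      log s - 2 + (log t - log s + 2) / t + log t := by
  have ht0 : 0 < t := hs.trans_le hst
  have hinner : EqOn (fun y => ∫ x in s..1, min x y / (x ^ 2 * y ^ 2))
      (fun y => (log y - log s + 1 - y) / y ^ 2) (uIcc t 1) := fun y hy => by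
    rw [uIcc_of_le ht] at hy
    simp only [min_comm _ y, div_mul_eq_div_div, intervalIntegral.integral_div]
    rw [integral_min_div_sq_of_le_of_le hs (hst.trans hy.1) hy.2, div_one]
  have hderiv (y : ℝ) (hy : 0 < y) : HasDerivAt (fun y => -((log y - log s + 2) / y) - log y)
      ((log y - log s + 1 - y) / y ^ 2) y := by
    have := (((hasDerivAt_log hy.ne').sub_const (log s)).add_const 2).div
      (hasDerivAt_id' y) hy.ne'
    refine (this.neg.sub (hasDerivAt_log hy.ne')).congr_deriv ?_
    field_simp
    ring
  have hcont : ContinuousOn (fun y => (log y - log s + 1 - y) / y ^ 2) (Ioi 0) :=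
    ((continuousOn_log.mono fun _ hy => ne_of_gt hy).sub continuousOn_const |>.add
      continuousOn_const |>.sub continuousOn_id).div (by fun_prop)
      fun _ hy => by have : (0 : ℝ) < _ := hy; positivity
  rw [integral_congr hinner, integral_eq_sub_of_hasDerivAt_of_pos hderiv hcont ht0 one_pos]
  simp only [log_one, div_one]
  ring

theorem covariance_Z_general (p s t : ℝ)
    (hs : 0 < s) (hst : s ≤ t) (ht : t ≤ 1)
    (I1 I2 I3 : ℝ)
    (hI1 : I1 = ∫ y in t..1, ∫ x in s..1, min x y / (x ^ 2 * y ^ 2))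
    (hI2 : I2 = ∫ u in t..1, (min s u - s * u) / u ^ 2)
    (hI3 : I3 = ∫ u in s..1, (min t u - t * u) / u ^ 2) :
    p ^ 2 * (min s⁻¹ t⁻¹ - 1) + p * (1 - p) * (min s⁻¹ t⁻¹ - 1)
        + p * (1 - p) * I1 - (1 / s) * (p * (1 - p)) * I2 - (1 / t) * (p * (1 - p)) * I3
      = p * (min s⁻¹ t⁻¹ - 1) := by
  have ht0 : 0 < t := hs.trans_le hst
  rw [integral_min_sub_mul_div_sq ht0 one_pos, integral_min_div_sq_of_le ht0 ht hst] at hI2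
  rw [integral_min_sub_mul_div_sq hs one_pos, integral_min_div_sq_of_le_of_le hs hst ht] at hI3
  have hI : I1 = I2 / s + I3 / t := by
    rw [hI1, hI2, hI3, integral_integral_min_div_sq_mul_sq hs hst ht, log_one]
    field_simp
    ring
  rw [hI]
  field_simp
  ring

/-- Covariance computation for the Gaussian martingale limit `𝔾` of the Extreme
Nelson–Aalen estimator: with `I₁, I₂, I₃` as in the paper (stated here for `s ≤ t`,
the `t ≤ s` case being symmetric),
`C(s,t) = p²(s⁻¹∧t⁻¹ - 1) + p(1-p)(s⁻¹∧t⁻¹ - 1) + p(1-p)I₁ - (1/s)p(1-p)I₂ - (1/t)p(1-p)I₃`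
equals `p(s⁻¹∧t⁻¹ - 1)`. -/
theorem covariance_Z (p s t : ℝ) (hp0 : 0 < p) (hp1 : p ≤ 1)
    (hs : 0 < s) (hst : s ≤ t) (ht : t ≤ 1)
    (I1 I2 I3 : ℝ)
    (hI1 : I1 = ∫ y in t..1, ∫ x in s..1, min x y / (x ^ 2 * y ^ 2))
    (hI2 : I2 = ∫ u in t..1, (min s u - s * u) / u ^ 2)
    (hI3 : I3 = ∫ u in s..1, (min t u - t * u) / u ^ 2) :
    p ^ 2 * (min s⁻¹ t⁻¹ - 1) + p * (1 - p) * (min s⁻¹ t⁻¹ - 1)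
        + p * (1 - p) * I1 - (1 / s) * (p * (1 - p)) * I2 - (1 / t) * (p * (1 - p)) * I3
      = p * (min s⁻¹ t⁻¹ - 1) :=
  covariance_Z_general p s t hs hst ht I1 I2 I3 hI1 hI2 hI3
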